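/- arXiv:1804.05035 — 2 statements merged into one kernel-verified Lean document; each statement's English description precedes it below -/
import Mathlib

section
/- Let X = X(A,a,b,δ) be an Engel set with 0 < δ < a < b, and let φ be an isometry of ℝ^d mapping a point x ∈ X_p to x' ∈ X_{p'} and the cluster C_x(2kR) onto C_{x'}(2kR) for some integer k ≥ 1. Then the linear part B_φ of φ permutes the signed horizontal basis vectors: B_φ e_s = ±e_{σ(s)} for some permutation σ of {1,…,d−1}; and B_φ e_d = e_d if p − p' is even, while B_φ e_d = −e_d if p − p' is odd. -/
noncomputable section
open scoped Pointwise

/-- Euclidean d-space. -/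
abbrev Euc (d : ℕ) : Type := EuclideanSpace ℝ (Fin d)

/-- The 1-based standard basis vector `e_k` of `ℝ^d` (for `1 ≤ k ≤ d`). -/
def eVec (d k : ℕ) : Euc d :=
  if h : k - 1 < d then EuclideanSpace.single ⟨k - 1, h⟩ (1 : ℝ) else 0

/-- Conditions (A1)–(A3) on the doubly-infinite integer sequence `A`. -/
def EngelSeq (d : ℕ) (A : ℤ → ℤ) : Prop :=
  (∀ i : ℤ, 1 ≤ (A i).natAbs ∧ (A i).natAbs ≤ d - 1) ∧
  (∀ i : ℤ, (A (i + (d - 1))).natAbs = (A i).natAbs) ∧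
  (∀ s : ℕ, 1 ≤ s → s ≤ d - 1 → ∃ i : ℤ, 1 ≤ i ∧ i ≤ d - 1 ∧ (A i).natAbs = s)

/-- The vector `u_i = sign(a_i) e_{|a_i|}`. -/
def engelU (d : ℕ) (A : ℤ → ℤ) (i : ℤ) : Euc d :=
  (if 0 < A i then (1 : ℝ) else -1) • eVec d (A i).natAbs

/-- The cumulative sum `u_1 + ⋯ + u_i` (with the natural convention for `i ≤ 0`,
so that `engelCum 0 = 0` and `engelCum i - engelCum (i-1) = u_i` for all `i`). -/
def engelCum (d : ℕ) (A : ℤ → ℤ) (i : ℤ) : Euc d :=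
  if 0 ≤ i then ∑ j ∈ Finset.range i.toNat, engelU d A ((j : ℤ) + 1)
  else -∑ j ∈ Finset.range (-i).toNat, engelU d A (-(j : ℤ))

/-- The translation vector placing layer `m` of an Engel set:
layer `m` lies at height `2bm`, and the horizontal shifts `δ·u_i` accumulate
according to (E3), (E4). (Integer division is floor division.) -/
def engelOffset (d : ℕ) (A : ℤ → ℤ) (b δ : ℝ) (m : ℤ) : Euc d :=
  ((2 * b) * (m : ℝ)) • eVec d d + δ • engelCum d A (m / 2)

/-- The horizontal grid `Y = 2aℤ^{d-1} × {0}` in `ℝ^d`. -/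
def engelGrid (d : ℕ) (a : ℝ) : Set (Euc d) :=
  {x | ∀ j : Fin d, ((j : ℕ) < d - 1 → ∃ m : ℤ, x j = 2 * a * (m : ℝ)) ∧
        ((j : ℕ) = d - 1 → x j = 0)}

/-- Layer `X_m` of the Engel set `X(A,a,b,δ)`. -/
def engelLayer (d : ℕ) (A : ℤ → ℤ) (a b δ : ℝ) (m : ℤ) : Set (Euc d) :=
  engelOffset d A b δ m +ᵥ engelGrid d a

/-- The Engel set `X(A,a,b,δ) = ⋃_m X_m`. -/
def engelSet (d : ℕ) (A : ℤ → ℤ) (a b δ : ℝ) : Set (Euc d) :=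
  ⋃ m : ℤ, engelLayer d A a b δ m

/-- A Delone set of type `(r,R)`: every open `r`-ball contains at most one point of `X`,
and every closed `R`-ball contains at least one point of `X`. -/
def IsDeloneSet {V : Type*} [MetricSpace V] (X : Set V) (r R : ℝ) : Prop :=
  (∀ y : V, (X ∩ Metric.ball y r).Subsingleton) ∧
  (∀ y : V, (X ∩ Metric.closedBall y R).Nonempty)

/-- The ρ-cluster of `X` at `x`. -/
def cluster {V : Type*} [MetricSpace V] (X : Set V) (x : V) (ρ : ℝ) : Set V :=
  X ∩ Metric.closedBall x ρ

/-- Equivalence of the ρ-clusters of `X` at `x` and `x'`: an isometry of the ambient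
space carries the one cluster onto the other, mapping center to center. -/
def ClustersEquiv {V : Type*} [MetricSpace V] (X : Set V) (x x' : V) (ρ : ℝ) : Prop :=
  ∃ g : V ≃ᵢ V, g x = x' ∧ g '' cluster X x ρ = cluster X x' ρ

/-- A regular system: the symmetry group of `X` acts transitively on `X`. -/
def IsRegularSystem {V : Type*} [MetricSpace V] (X : Set V) : Prop :=
  ∀ x ∈ X, ∀ y ∈ X, ∃ g : V ≃ᵢ V, g '' X = X ∧ g x = y


/-!
An isometry of `ℝ^d` is affine (Mazur–Ulam), so `φ (x + v) = x' + B v` with `B` a linear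
isometry, and `B` carries the points of `X` near `x` to points of `X` near `x'`. Layers are
`2b > 2a` apart in height, so the points of `X` at distance `2a` from a point are its lattice
neighbours `± 2a e_s`, `s < d`; hence `B` permutes the signed horizontal basis vectors, and
`B e_d = ± e_d` by orthogonality. The sign comes from the vertical neighbours: for `y ∈ X_m`,
exactly one of `y ± 2b e_d` lies in `X`, namely `y + (-1)^m 2b e_d`, because the shift `δ u_i`
between the layers `2i - 1` and `2i` is not a lattice vector (`0 < δ < 2a`).
-/

theorem IsometryEquiv.map_add_sub_map {E F : Type*} [NormedAddCommGroup E] [NormedSpace ℝ E]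
    [NormedAddCommGroup F] [NormedSpace ℝ F] (φ : E ≃ᵢ F) (x v : E) :
    φ (x + v) - φ x = φ.toRealLinearIsometryEquiv v := by
  rw [← sub_sub_sub_cancel_right _ _ (φ 0), ← φ.toRealLinearIsometryEquiv_apply,
    ← φ.toRealLinearIsometryEquiv_apply, ← map_sub, add_sub_cancel_left]

theorem Int.exists_eq_one_or_eq_neg_one_of_sum_sq_eq_one {ι : Type*} [Fintype ι] [DecidableEq ι]
    {n : ι → ℤ} (h : ∑ i, n i ^ 2 = 1) : ∃ i, (n i = 1 ∨ n i = -1) ∧ ∀ j ≠ i, n j = 0 := by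
  obtain ⟨i, hi⟩ : ∃ i, n i ≠ 0 := by
    by_contra! h0
    simp [h0] at h
  have hsplit := Finset.add_sum_erase Finset.univ (fun j => n j ^ 2) (Finset.mem_univ i)
  have hrest : 0 ≤ ∑ j ∈ Finset.univ.erase i, n j ^ 2 := by positivity
  have hni : 0 < n i ^ 2 := by positivity
  refine ⟨i, sq_eq_one_iff.mp (by omega), fun j hj => pow_eq_zero_iff two_ne_zero |>.mp ?_⟩
  exact (Finset.sum_eq_zero_iff_of_nonneg (fun _ _ => sq_nonneg _)).mp (by omega) j
    (Finset.mem_erase.mpr ⟨hj, Finset.mem_univ j⟩)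

theorem EuclideanSpace.exists_eq_smul_single_of_norm_eq {ι : Type*} [Fintype ι] [DecidableEq ι]
    {c : ℝ} (hc : c ≠ 0) {w : EuclideanSpace ℝ ι} (hw : ∀ i, ∃ n : ℤ, w i = c * n)
    (hnorm : ‖w‖ = c) : ∃ i, w = c • single i 1 ∨ w = -(c • single i 1) := by
  choose n hn using hw
  have hsum : ∑ i, n i ^ 2 = 1 := by
    have h := EuclideanSpace.real_norm_sq_eq w
    simp only [hnorm, hn, mul_pow, ← Finset.mul_sum] at h
    exact_mod_cast (mul_eq_left₀ (pow_ne_zero 2 hc)).mp h.symm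
  obtain ⟨i, hi, hj⟩ := Int.exists_eq_one_or_eq_neg_one_of_sum_sq_eq_one hsum
  refine ⟨i, hi.imp (fun h => ?_) (fun h => ?_)⟩ <;> ext j <;>
    rcases eq_or_ne j i with rfl | hji <;> simp [*]

theorem Orthonormal.eq_of_eq_or_eq_neg {ι E : Type*} [NormedAddCommGroup E] [InnerProductSpace ℝ E]
    {v : ι → E} (hv : Orthonormal ℝ v) {s t : ι} (h : v s = v t ∨ v s = -v t) : s = t := by
  by_contra hst
  have h1 : inner ℝ (v s) (v s) = (1 : ℝ) := real_inner_self_eq_norm_sq (v s) ▸ by simp [hv.1 s]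
  rcases h with h | h <;> nth_rw 2 [h] at h1 <;> simp [hv.2 hst] at h1

theorem Orthonormal.exists_perm_of_forall_map_eq_or_eq_neg {κ E : Type*} [Finite κ]
    [NormedAddCommGroup E] [InnerProductSpace ℝ E] {v : κ → E} (hv : Orthonormal ℝ v)
    (B : E →ₗᵢ[ℝ] E) (h : ∀ s, ∃ t, B (v s) = v t ∨ B (v s) = -v t) :
    ∃ σ : Equiv.Perm κ, ∀ s, B (v s) = v (σ s) ∨ B (v s) = -v (σ s) := by
  choose f hf using h
  have hinj : Function.Injective f := by
    intro s₁ s₂ hs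
    refine (hv.comp_linearIsometry B).eq_of_eq_or_eq_neg ?_
    simp only [Function.comp_apply]
    rcases hf s₁ with h₁ | h₁ <;> rcases hf s₂ with h₂ | h₂ <;> simp [h₁, h₂, hs]
  exact ⟨Equiv.ofBijective f hinj.bijective_of_finite, hf⟩

theorem OrthonormalBasis.exists_map_eq_smul_of_forall_ne {ι E : Type*} [Fintype ι]
    [NormedAddCommGroup E] [InnerProductSpace ℝ E] (b : OrthonormalBasis ι ℝ E) (B : E →ₗᵢ[ℝ] E)
    {i₀ : ι} (h : ∀ j ≠ i₀, ∃ s ≠ i₀, B (b s) = b j ∨ B (b s) = -b j) :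
    ∃ c : ℝ, (c = 1 ∨ c = -1) ∧ B (b i₀) = c • b i₀ := by
  have horth : ∀ j ≠ i₀, inner ℝ (b j) (B (b i₀)) = 0 := by
    intro j hj
    obtain ⟨s, hs, hsj⟩ := h j hj
    have h0 : inner ℝ (B (b s)) (B (b i₀)) = 0 := by
      rw [B.inner_map_map]; exact b.orthonormal.2 hs
    rcases hsj with hsj | hsj <;> simpa [hsj] using h0
  have hB : B (b i₀) = inner ℝ (b i₀) (B (b i₀)) • b i₀ := by
    conv_lhs => rw [← b.sum_repr' (B (b i₀))]
    exact Finset.sum_eq_single i₀ (fun j _ hj => by rw [horth j hj, zero_smul])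
      (fun h => absurd (Finset.mem_univ i₀) h)
  refine ⟨_, abs_eq zero_le_one |>.mp ?_, hB⟩
  have hn := congrArg norm hB
  rwa [B.norm_map, norm_smul, b.orthonormal.1, mul_one, Real.norm_eq_abs, eq_comm] at hn

section Engel

variable {d : ℕ} {A : ℤ → ℤ} {a b δ : ℝ}

theorem EngelSeq.two_le (hA : EngelSeq d A) : 2 ≤ d := by
  have := hA.1 0
  omega

theorem eVec_eq_single {k : ℕ} (hk : k - 1 < d) :
    eVec d k = EuclideanSpace.single ⟨k - 1, hk⟩ 1 :=
  dif_pos hk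

theorem eVec_apply {k : ℕ} (hk : k - 1 < d) (j : Fin d) :
    eVec d k j = if (j : ℕ) = k - 1 then 1 else 0 := by
  simp [eVec_eq_single hk, PiLp.single_apply, Fin.ext_iff]

theorem eVec_succ (i : Fin d) : eVec d (i + 1) = EuclideanSpace.single i 1 :=
  eVec_eq_single (by omega)

theorem norm_eVec {k : ℕ} (hk : k - 1 < d) : ‖eVec d k‖ = 1 := by
  simp [eVec_eq_single hk]

theorem orthonormal_eVec_succ : Orthonormal ℝ fun s : Fin (d - 1) => eVec d (s + 1) := by
  have h : (fun s : Fin (d - 1) => eVec d (s + 1)) =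
      EuclideanSpace.basisFun (Fin d) ℝ ∘ Fin.castLE (Nat.sub_le d 1) := by
    funext s
    rw [Function.comp_apply, EuclideanSpace.basisFun_apply]
    exact eVec_succ (Fin.castLE _ s)
  rw [h]
  exact (EuclideanSpace.basisFun (Fin d) ℝ).orthonormal.comp _ (Fin.castLE_injective _)

def engelLattice (d : ℕ) (a : ℝ) : AddSubgroup (Euc d) where
  carrier := engelGrid d a
  zero_mem' j := ⟨fun _ => ⟨0, by simp⟩, fun _ => rfl⟩
  add_mem' {x y} hx hy j :=
    ⟨fun hj => by
      obtain ⟨m, hm⟩ := (hx j).1 hj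
      obtain ⟨n, hn⟩ := (hy j).1 hj
      exact ⟨m + n, by simp [hm, hn]; ring⟩,
    fun hj => by simp [(hx j).2 hj, (hy j).2 hj]⟩
  neg_mem' {x} hx j :=
    ⟨fun hj => by
      obtain ⟨m, hm⟩ := (hx j).1 hj
      exact ⟨-m, by simp [hm]⟩,
    fun hj => by simp [(hx j).2 hj]⟩

theorem mem_engelLayer_iff {y : Euc d} {m : ℤ} :
    y ∈ engelLayer d A a b δ m ↔ y - engelOffset d A b δ m ∈ engelGrid d a := by
  rw [engelLayer, Set.mem_vadd_set_iff_neg_vadd_mem, vadd_eq_add, neg_add_eq_sub]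

theorem sub_mem_engelGrid {y z : Euc d} {m : ℤ} (hy : y ∈ engelLayer d A a b δ m)
    (hz : z ∈ engelLayer d A a b δ m) : y - z ∈ engelGrid d a := by
  have h := (engelLattice d a).sub_mem (mem_engelLayer_iff.mp hy) (mem_engelLayer_iff.mp hz)
  rwa [sub_sub_sub_cancel_right] at h

theorem add_mem_engelLayer {y g : Euc d} {m : ℤ} (hy : y ∈ engelLayer d A a b δ m)
    (hg : g ∈ engelGrid d a) : y + g ∈ engelLayer d A a b δ m := by
  rw [mem_engelLayer_iff, add_sub_right_comm]
  exact (engelLattice d a).add_mem (mem_engelLayer_iff.mp hy) hg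

theorem smul_eVec_succ_mem_engelGrid (s : Fin (d - 1)) :
    (2 * a) • eVec d (s + 1) ∈ engelGrid d a := by
  intro j
  rw [PiLp.smul_apply, eVec_apply (by omega)]
  exact ⟨fun _ => ⟨if (j : ℕ) = s + 1 - 1 then 1 else 0, by split_ifs <;> simp⟩,
    fun hj => by rw [if_neg (by omega), smul_zero]⟩

theorem apply_eq_zero_or_two_mul_abs_le_of_mem_engelGrid {g : Euc d} (hg : g ∈ engelGrid d a)
    (j : Fin d) : g j = 0 ∨ 2 * |a| ≤ |g j| := by
  rcases Nat.lt_or_ge j (d - 1) with hj | hj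
  · obtain ⟨n, hn⟩ := (hg j).1 hj
    rcases eq_or_ne n 0 with rfl | hn0
    · simp [hn]
    · right
      have : (1 : ℝ) ≤ |(n : ℝ)| := by exact_mod_cast Int.one_le_abs hn0
      rw [hn, abs_mul, abs_mul, abs_two]
      nlinarith [abs_nonneg a]
  · exact Or.inl ((hg j).2 (by omega))

theorem engelU_apply_last (hA : EngelSeq d A) (i : ℤ) {j : Fin d} (hj : (j : ℕ) = d - 1) :
    engelU d A i j = 0 := by
  have := hA.1 i
  rw [engelU, PiLp.smul_apply, eVec_apply (k := (A i).natAbs) (by omega),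
    if_neg (show (j : ℕ) ≠ (A i).natAbs - 1 by omega), smul_zero]

theorem engelLayer_apply_last (hA : EngelSeq d A) {y : Euc d} {m : ℤ}
    (hy : y ∈ engelLayer d A a b δ m) {j : Fin d} (hj : (j : ℕ) = d - 1) : y j = 2 * b * m := by
  have hcum : ∀ i, engelCum d A i j = 0 := by
    intro i
    unfold engelCum
    split_ifs <;> simp [engelU_apply_last hA _ hj]
  have h := ((mem_engelLayer_iff.mp hy) j).2 hj
  simp only [engelOffset, PiLp.sub_apply, PiLp.add_apply, PiLp.smul_apply, smul_eq_mul,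
    eVec_apply (show d - 1 < d by omega), hj, if_pos, mul_one, hcum, mul_zero, add_zero] at h
  linarith

theorem eq_of_mem_engelLayer_of_norm_sub_lt (hA : EngelSeq d A) {y z : Euc d} {m n : ℤ}
    (hy : y ∈ engelLayer d A a b δ m) (hz : z ∈ engelLayer d A a b δ n) (h : ‖z - y‖ < 2 * b) :
    n = m := by
  have hd := hA.two_le
  have hb : 0 < 2 * b := (norm_nonneg _).trans_lt h
  have hj : ((⟨d - 1, by omega⟩ : Fin d) : ℕ) = d - 1 := rfl
  have hlast := (PiLp.norm_apply_le (z - y) ⟨d - 1, by omega⟩).trans_lt h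
  rw [PiLp.sub_apply, engelLayer_apply_last hA hz hj, engelLayer_apply_last hA hy hj,
    ← mul_sub, Real.norm_eq_abs, abs_mul, abs_of_pos hb] at hlast
  have : |((n - m : ℤ) : ℝ)| < 1 := by
    push_cast
    exact lt_of_mul_lt_mul_left (by rwa [mul_one]) hb.le
  have : |n - m| < 1 := by exact_mod_cast this
  exact sub_eq_zero.mp (Int.abs_lt_one_iff.mp this)

theorem exists_eq_smul_eVec_of_add_mem_engelSet (hA : EngelSeq d A) (ha : 0 < a) (hab : a < b)
    {x w : Euc d} {p : ℤ} (hx : x ∈ engelLayer d A a b δ p) (hw : x + w ∈ engelSet d A a b δ)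
    (hnorm : ‖w‖ = 2 * a) :
    ∃ t : Fin (d - 1), w = (2 * a) • eVec d (t + 1) ∨ w = -((2 * a) • eVec d (t + 1)) := by
  obtain ⟨n, hn⟩ := Set.mem_iUnion.mp hw
  obtain rfl : n = p :=
    eq_of_mem_engelLayer_of_norm_sub_lt hA hx hn (by rw [add_sub_cancel_left]; linarith)
  have hgrid : w ∈ engelGrid d a := by simpa using sub_mem_engelGrid hn hx
  have hint : ∀ j, ∃ n : ℤ, w j = 2 * a * n := fun j => by
    rcases Nat.lt_or_ge j (d - 1) with hj | hj
    · exact (hgrid j).1 hj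
    · exact ⟨0, by simp [(hgrid j).2 (by omega)]⟩
  obtain ⟨i, hi⟩ := EuclideanSpace.exists_eq_smul_single_of_norm_eq (by positivity) hint hnorm
  have hi_lt : (i : ℕ) < d - 1 := by
    have hwi : |w i| = 2 * a := by rcases hi with hi | hi <;> simp [hi, abs_of_pos ha]
    by_contra! h
    rw [(hgrid i).2 (by omega), abs_zero] at hwi
    linarith
  exact ⟨⟨i, hi_lt⟩, by simpa only [eVec_succ] using hi⟩

theorem engelCum_add_one (i : ℤ) :
    engelCum d A (i + 1) = engelCum d A i + engelU d A (i + 1) := by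
  rcases lt_trichotomy i (-1) with h | rfl | h
  · rw [engelCum, engelCum, if_neg (by omega), if_neg (by omega),
      show (-i).toNat = (-(i + 1)).toNat + 1 by omega, Finset.sum_range_succ,
      show -(((-(i + 1)).toNat : ℕ) : ℤ) = i + 1 by omega]
    abel
  · norm_num [engelCum]
  · rw [engelCum, engelCum, if_pos (by omega), if_pos (by omega),
      show (i + 1).toNat = i.toNat + 1 by omega, Finset.sum_range_succ,
      show ((i.toNat : ℕ) : ℤ) + 1 = i + 1 by omega]

theorem engelOffset_add_one_of_even {m : ℤ} (hm : Even m) :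
    engelOffset d A b δ (m + 1) = engelOffset d A b δ m + (2 * b) • eVec d d := by
  obtain ⟨r, rfl⟩ := hm
  rw [engelOffset, engelOffset, show (r + r + 1) / 2 = (r + r) / 2 by omega]
  push_cast
  module

theorem engelOffset_add_one_of_odd {m : ℤ} (hm : Odd m) :
    engelOffset d A b δ (m + 1) =
      engelOffset d A b δ m + (2 * b) • eVec d d + δ • engelU d A (m / 2 + 1) := by
  obtain ⟨r, rfl⟩ := hm
  rw [engelOffset, engelOffset, show (2 * r + 1 + 1) / 2 = (2 * r + 1) / 2 + 1 by omega,
    engelCum_add_one]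
  push_cast
  module

theorem smul_engelU_not_mem_engelGrid (hA : EngelSeq d A) (hδ : 0 < δ) (hδa : δ < 2 * a)
    (i : ℤ) : δ • engelU d A i ∉ engelGrid d a := by
  intro hg
  have := hA.1 i
  have hj : (A i).natAbs - 1 < d := by omega
  have hval : |(δ • engelU d A i) ⟨_, hj⟩| = δ := by
    rw [PiLp.smul_apply, engelU, PiLp.smul_apply, eVec_apply hj, if_pos rfl]
    split_ifs <;> simp [abs_of_pos hδ]
  rcases apply_eq_zero_or_two_mul_abs_le_of_mem_engelGrid hg ⟨_, hj⟩ with h | h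
  · rw [h, abs_zero] at hval
    linarith
  · rw [hval] at h
    linarith [le_abs_self a]

theorem add_smul_eVec_mem_engelLayer_add_one_iff {y : Euc d} {m : ℤ} (hm : Even m) :
    y + (2 * b) • eVec d d ∈ engelLayer d A a b δ (m + 1) ↔ y ∈ engelLayer d A a b δ m := by
  rw [mem_engelLayer_iff, mem_engelLayer_iff, engelOffset_add_one_of_even hm,
    add_sub_add_right_eq_sub]

theorem eq_add_one_of_add_smul_eVec_mem (hA : EngelSeq d A) (hb : b ≠ 0) {y : Euc d} {m n : ℤ}
    (hy : y ∈ engelLayer d A a b δ m) (hn : y + (2 * b) • eVec d d ∈ engelLayer d A a b δ n) :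
    n = m + 1 := by
  have hd := hA.two_le
  have hj : ((⟨d - 1, by omega⟩ : Fin d) : ℕ) = d - 1 := rfl
  have h := engelLayer_apply_last hA hn hj
  rw [PiLp.add_apply, PiLp.smul_apply, engelLayer_apply_last hA hy hj,
    eVec_apply (by omega), if_pos hj, smul_eq_mul, mul_one, ← mul_add_one] at h
  exact_mod_cast (mul_left_cancel₀ (mul_ne_zero two_ne_zero hb) h).symm

theorem add_smul_eVec_not_mem_engelSet_of_odd (hA : EngelSeq d A) (hb : b ≠ 0) (hδ : 0 < δ)
    (hδa : δ < 2 * a) {y : Euc d} {m : ℤ} (hm : Odd m) (hy : y ∈ engelLayer d A a b δ m) :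
    y + (2 * b) • eVec d d ∉ engelSet d A a b δ := by
  intro h
  obtain ⟨n, hn⟩ := Set.mem_iUnion.mp h
  obtain rfl := eq_add_one_of_add_smul_eVec_mem hA hb hy hn
  rw [mem_engelLayer_iff, engelOffset_add_one_of_odd hm] at hn
  apply smul_engelU_not_mem_engelGrid hA hδ hδa (m / 2 + 1)
  have h' : _ ∈ engelGrid d a := (engelLattice d a).sub_mem (mem_engelLayer_iff.mp hy) hn
  convert h' using 1
  abel

theorem sub_smul_eVec_not_mem_engelSet_of_even (hA : EngelSeq d A) (hb : b ≠ 0) (hδ : 0 < δ)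
    (hδa : δ < 2 * a) {y : Euc d} {m : ℤ} (hm : Even m) (hy : y ∈ engelLayer d A a b δ m) :
    y - (2 * b) • eVec d d ∉ engelSet d A a b δ := by
  intro h
  obtain ⟨n, hn⟩ := Set.mem_iUnion.mp h
  obtain rfl := eq_add_one_of_add_smul_eVec_mem hA hb hn (by rwa [sub_add_cancel])
  have hn_odd : Odd n := Int.not_even_iff_odd.mp (Int.even_add_one.mp hm)
  refine add_smul_eVec_not_mem_engelSet_of_odd hA hb hδ hδa hn_odd hn ?_
  rw [sub_add_cancel]
  exact Set.mem_iUnion.mpr ⟨_, hy⟩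

theorem add_smul_eVec_mem_engelSet_of_even {y : Euc d} {m : ℤ} (hm : Even m)
    (hy : y ∈ engelLayer d A a b δ m) : y + (2 * b) • eVec d d ∈ engelSet d A a b δ :=
  Set.mem_iUnion.mpr ⟨m + 1, (add_smul_eVec_mem_engelLayer_add_one_iff hm).mpr hy⟩

theorem sub_smul_eVec_mem_engelSet_of_odd {y : Euc d} {m : ℤ} (hm : Odd m)
    (hy : y ∈ engelLayer d A a b δ m) : y - (2 * b) • eVec d d ∈ engelSet d A a b δ := by
  refine Set.mem_iUnion.mpr ⟨m - 1, (add_smul_eVec_mem_engelLayer_add_one_iff ?_).mp ?_⟩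
  · exact hm.sub_odd odd_one
  · rwa [sub_add_cancel, sub_add_cancel]

theorem add_smul_eVec_mem_engelSet_iff (hA : EngelSeq d A) (hb : b ≠ 0) (hδ : 0 < δ)
    (hδa : δ < 2 * a) {y : Euc d} {m : ℤ} (hy : y ∈ engelLayer d A a b δ m) {ε : ℝ}
    (hε : ε = 1 ∨ ε = -1) :
    y + (2 * b * ε) • eVec d d ∈ engelSet d A a b δ ↔ ε = (-1) ^ m := by
  rcases Int.even_or_odd m with hm | hm
  · rw [hm.neg_one_zpow]
    rcases hε with rfl | rfl
    · simpa using add_smul_eVec_mem_engelSet_of_even hm hy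
    · refine iff_of_false ?_ (by norm_num)
      simpa [sub_eq_add_neg] using sub_smul_eVec_not_mem_engelSet_of_even hA hb hδ hδa hm hy
  · rw [hm.neg_one_zpow]
    rcases hε with rfl | rfl
    · refine iff_of_false ?_ (by norm_num)
      simpa using add_smul_eVec_not_mem_engelSet_of_odd hA hb hδ hδa hm hy
    · simpa [sub_eq_add_neg] using sub_smul_eVec_mem_engelSet_of_odd hm hy

section LinearPart

variable {x x' : Euc d} {p p' : ℤ} {ρ : ℝ} (B : Euc d →ₗᵢ[ℝ] Euc d)

theorem exists_perm_map_eVec_succ (hA : EngelSeq d A) (ha : 0 < a) (hab : a < b)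
    (hx : x ∈ engelLayer d A a b δ p) (hx' : x' ∈ engelLayer d A a b δ p') (hρ : 2 * a ≤ ρ)
    (hB : ∀ v, ‖v‖ ≤ ρ → x + v ∈ engelSet d A a b δ → x' + B v ∈ engelSet d A a b δ) :
    ∃ σ : Equiv.Perm (Fin (d - 1)), ∀ s : Fin (d - 1),
      B (eVec d (s + 1)) = eVec d (σ s + 1) ∨ B (eVec d (s + 1)) = -eVec d (σ s + 1) := by
  refine orthonormal_eVec_succ.exists_perm_of_forall_map_eq_or_eq_neg B fun s => ?_
  have hnorm : ‖(2 * a) • eVec d (s + 1)‖ = 2 * a := by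
    rw [norm_smul, norm_eVec (by omega), mul_one, Real.norm_of_nonneg (by positivity)]
  have hmem : x + (2 * a) • eVec d (s + 1) ∈ engelSet d A a b δ :=
    Set.mem_iUnion.mpr ⟨p, add_mem_engelLayer hx (smul_eVec_succ_mem_engelGrid s)⟩
  obtain ⟨t, ht⟩ := exists_eq_smul_eVec_of_add_mem_engelSet hA ha hab hx'
    (hB _ (hnorm.trans_le hρ) hmem) (by rw [B.norm_map, hnorm])
  have h2a : (2 * a : ℝ) ≠ 0 := by positivity
  refine ⟨t, ht.imp (fun h => ?_) (fun h => ?_)⟩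
  · rw [map_smul] at h
    exact smul_right_injective _ h2a h
  · rw [map_smul, ← smul_neg] at h
    exact smul_right_injective _ h2a h

theorem exists_map_eVec_self_eq_smul (hd : 0 < d) {σ : Equiv.Perm (Fin (d - 1))}
    (hσ : ∀ s : Fin (d - 1),
      B (eVec d (s + 1)) = eVec d (σ s + 1) ∨ B (eVec d (s + 1)) = -eVec d (σ s + 1)) :
    ∃ c : ℝ, (c = 1 ∨ c = -1) ∧ B (eVec d d) = c • eVec d d := by
  set e := EuclideanSpace.basisFun (Fin d) ℝ
  have he : ∀ {k} (hk : k - 1 < d), eVec d k = e ⟨k - 1, hk⟩ := fun hk => by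
    rw [eVec_eq_single hk, EuclideanSpace.basisFun_apply]
  rw [he (show d - 1 < d by omega)]
  refine e.exists_map_eq_smul_of_forall_ne B fun j hj => ?_
  have hj' : (j : ℕ) < d - 1 := by
    have := Fin.val_ne_of_ne hj
    simp only at this
    omega
  let t : Fin (d - 1) := ⟨j, hj'⟩
  refine ⟨⟨σ.symm t, by omega⟩, Fin.ne_of_val_ne (by simp only; omega), ?_⟩
  have h := hσ (σ.symm t)
  rwa [Equiv.apply_symm_apply, he, he] at h

theorem eq_neg_one_zpow_of_map_eVec_self_eq_smul (hA : EngelSeq d A) (hb : 0 < b) (hδ : 0 < δ)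
    (hδa : δ < 2 * a) (hx : x ∈ engelLayer d A a b δ p) (hx' : x' ∈ engelLayer d A a b δ p')
    (hρ : 2 * b ≤ ρ)
    (hB : ∀ v, ‖v‖ ≤ ρ → x + v ∈ engelSet d A a b δ → x' + B v ∈ engelSet d A a b δ)
    {c : ℝ} (hc : c = 1 ∨ c = -1) (hBc : B (eVec d d) = c • eVec d d) :
    c = (-1) ^ (p' - p) := by
  have hd := hA.two_le
  have hsign : ∀ m : ℤ, (-1 : ℝ) ^ m = 1 ∨ (-1 : ℝ) ^ m = -1 := fun m =>
    (Int.even_or_odd m).imp Even.neg_one_zpow Odd.neg_one_zpow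
  have hmem := (add_smul_eVec_mem_engelSet_iff hA hb.ne' hδ hδa hx (hsign p)).mpr rfl
  have hnorm : ‖(2 * b * (-1) ^ p) • eVec d d‖ ≤ ρ := by
    rwa [norm_smul, norm_eVec (by omega), mul_one, Real.norm_eq_abs, abs_mul, abs_neg_one_zpow,
      mul_one, abs_of_pos (by positivity)]
  have hmem' := hB _ hnorm hmem
  rw [map_smul, hBc, smul_smul, mul_assoc] at hmem'
  have hc' : (-1) ^ p * c = 1 ∨ (-1) ^ p * c = -1 := by
    rcases hsign p with h | h <;> rcases hc with rfl | rfl <;> simp [h]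
  have hp' := (add_smul_eVec_mem_engelSet_iff hA hb.ne' hδ hδa hx' hc').mp hmem'
  rw [zpow_sub₀ (by norm_num), ← hp', mul_div_cancel_left₀ _ (zpow_ne_zero _ (by norm_num))]

end LinearPart

end Engel

theorem engel_isometry_linear_part_general (d : ℕ) (A : ℤ → ℤ) (hA : EngelSeq d A)
    (a b δ : ℝ) (hδ : 0 < δ) (hδa : δ < a) (hab : a < b)
    (R : ℝ) (hR : R = Real.sqrt (b ^ 2 + ((d : ℝ) - 1) * a ^ 2))
    (k : ℕ) (hk : 1 ≤ k) (p p' : ℤ) (x x' : Euc d)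
    (hx : x ∈ engelLayer d A a b δ p) (hx' : x' ∈ engelLayer d A a b δ p')
    (φ : Euc d ≃ᵢ Euc d) (hφx : φ x = x')
    (hφC : φ '' cluster (engelSet d A a b δ) x (2 * (k : ℝ) * R) =
      cluster (engelSet d A a b δ) x' (2 * (k : ℝ) * R)) :
    (∃ σ : Equiv.Perm (Fin (d - 1)), ∀ s : Fin (d - 1),
      φ (x + eVec d ((s : ℕ) + 1)) - x' = eVec d ((σ s : ℕ) + 1) ∨
      φ (x + eVec d ((s : ℕ) + 1)) - x' = -eVec d ((σ s : ℕ) + 1)) ∧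
    ((p - p') % 2 = 0 → φ (x + eVec d d) - x' = eVec d d) ∧
    ((p - p') % 2 ≠ 0 → φ (x + eVec d d) - x' = -eVec d d) := by
  subst hφx
  set B := φ.toRealLinearIsometryEquiv
  have ha : 0 < a := hδ.trans hδa
  have hbR : b ≤ R := by
    have hd : (1 : ℝ) ≤ d := by exact_mod_cast one_le_two.trans hA.two_le
    rw [hR]
    exact Real.le_sqrt_of_sq_le (le_add_of_nonneg_right (by positivity))
  have hρ : 2 * b ≤ 2 * k * R := by
    have : (1 : ℝ) ≤ k := by exact_mod_cast hk
    nlinarith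
  have hB : ∀ v, ‖v‖ ≤ 2 * k * R → x + v ∈ engelSet d A a b δ →
      φ x + B v ∈ engelSet d A a b δ := fun v hv hxv => by
    rw [← φ.map_add_sub_map, add_sub_cancel]
    exact (hφC.subset ⟨x + v, ⟨hxv, by simpa using hv⟩, rfl⟩).1
  obtain ⟨σ, hσ⟩ :=
    exists_perm_map_eVec_succ B.toLinearIsometry hA ha hab hx hx' (by linarith) hB
  obtain ⟨c, hc, hBc⟩ :=
    exists_map_eVec_self_eq_smul B.toLinearIsometry (zero_lt_two.trans_le hA.two_le) hσ
  have hcp := eq_neg_one_zpow_of_map_eVec_self_eq_smul B.toLinearIsometry hA (ha.trans hab) hδ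
    (by linarith) hx hx' hρ hB hc hBc
  simp only [φ.map_add_sub_map]
  refine ⟨⟨σ, hσ⟩, fun h => ?_, fun h => ?_⟩
  · rw [← B.coe_toLinearIsometry, hBc, hcp,
      Even.neg_one_zpow (Int.even_iff.mpr (by omega)), one_smul]
  · rw [← B.coe_toLinearIsometry, hBc, hcp,
      Odd.neg_one_zpow (Int.odd_iff.mpr (by omega)), neg_one_smul]

/-- Lemma 5.4, linear part: if an isometry `φ` of `ℝ^d` maps `x ∈ X_p` to
`x' ∈ X_{p'}` and the cluster `C_x(2kR)` onto `C_{x'}(2kR)` (`k ≥ 1`), then the linear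
part `B_φ` of `φ` (given by `B_φ v = φ(x + v) - φ(x)`) maps each `e_s`, `1 ≤ s ≤ d-1`, to
`±e_{σ(s)}` for some permutation `σ` of `{1, …, d-1}`, and maps `e_d` to `e_d` if
`p - p'` is even and to `-e_d` if `p - p'` is odd. -/
theorem engel_isometry_linear_part (d : ℕ) (hd : 2 ≤ d) (A : ℤ → ℤ) (hA : EngelSeq d A)
    (a b δ : ℝ) (hδ : 0 < δ) (hδa : δ < a) (hab : a < b)
    (R : ℝ) (hR : R = Real.sqrt (b ^ 2 + ((d : ℝ) - 1) * a ^ 2))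
    (k : ℕ) (hk : 1 ≤ k) (p p' : ℤ) (x x' : Euc d)
    (hx : x ∈ engelLayer d A a b δ p) (hx' : x' ∈ engelLayer d A a b δ p')
    (φ : Euc d ≃ᵢ Euc d) (hφx : φ x = x')
    (hφC : φ '' cluster (engelSet d A a b δ) x (2 * (k : ℝ) * R) =
      cluster (engelSet d A a b δ) x' (2 * (k : ℝ) * R)) :
    (∃ σ : Equiv.Perm (Fin (d - 1)), ∀ s : Fin (d - 1),
      φ (x + eVec d ((s : ℕ) + 1)) - x' = eVec d ((σ s : ℕ) + 1) ∨
      φ (x + eVec d ((s : ℕ) + 1)) - x' = -eVec d ((σ s : ℕ) + 1)) ∧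
    ((p - p') % 2 = 0 → φ (x + eVec d d) - x' = eVec d d) ∧
    ((p - p') % 2 ≠ 0 → φ (x + eVec d d) - x' = -eVec d d) :=
  engel_isometry_linear_part_general d A hA a b δ hδ hδa hab R hR k hk p p' x x' hx hx' φ hφx hφC
end
end

section
/- Every Delone set X of type (r,R) in ℝ with the property that all its ρ-clusters are mutually equivalent and contain points of X on both sides of their centers is an ab-set (distances between consecutive points alternate between two fixed values a and b, possibly equal), and hence a regular system. -/
noncomputable section
open scoped Pointwise

/-- An `ab`-set on the line: the points can be enumerated in increasing order so that
consecutive gaps alternately equal `a` and `b`. -/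
def IsABSet (X : Set ℝ) (a b : ℝ) : Prop :=
  ∃ f : ℤ → ℝ, StrictMono f ∧ Set.range f = X ∧
    (∀ i : ℤ, f (2 * i + 1) - f (2 * i) = a) ∧
    (∀ i : ℤ, f (2 * i + 2) - f (2 * i + 1) = b)

/-! An isometry of `ℝ` is a translation or a reflection, so if the `ρ`-clusters at `x` and `x'`
are equivalent, the cluster at `x'` recentred at `x'` is the cluster at `x` recentred at `x`, or
its mirror image. Both neighbours of a point lie in its cluster, so the gaps to the left and right
neighbours of `x'` are those of `x`, possibly swapped. Enumerating the discrete set `X` increasingly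
as `f : ℤ → ℝ` and comparing `f (n + 1)` with `f (n + 2)` shows that the gap sequence is
`2`-periodic. Then a translation by an even number of steps, or the reflection exchanging `f i` and
`f j` when `j - i` is odd, maps `X` onto itself. -/

open Set Function

theorem IsometryEquiv.real_eq_add_or_sub (g : ℝ ≃ᵢ ℝ) :
    (∀ t, g t = g 0 + t) ∨ ∀ t, g t = g 0 - t := by
  have hdist (s t : ℝ) : (g s - g t) ^ 2 = (s - t) ^ 2 := by
    rw [← sq_abs, ← Real.dist_eq, g.dist_eq, Real.dist_eq, sq_abs]
  have hlin (t : ℝ) : g t = g 0 + (g 1 - g 0) * t := by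
    nlinarith [hdist t 0, hdist t 1, hdist 1 0]
  rcases (by simpa using hdist 1 0 : g 1 - g 0 = 1 ∨ g 1 - g 0 = -1) with h | h
  · exact .inl fun t => by rw [hlin t, h, one_mul]
  · exact .inr fun t => by rw [hlin t, h]; ring

theorem ClustersEquiv.centered_eq_or_eq_neg {X : Set ℝ} {x x' ρ : ℝ}
    (h : ClustersEquiv X x x' ρ) :
    (· - x') '' cluster X x' ρ = (· - x) '' cluster X x ρ ∨
      (· - x') '' cluster X x' ρ = -((· - x) '' cluster X x ρ) := by
  obtain ⟨g, hgx, hg⟩ := h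
  rw [← hg, image_image, ← image_neg_eq_neg, image_image]
  rcases g.real_eq_add_or_sub with hg | hg
  · refine .inl (image_congr fun t _ => ?_)
    rw [← hgx, hg t, hg x]; ring
  · refine .inr (image_congr fun t _ => ?_)
    rw [← hgx, hg t, hg x]; ring

theorem IsDeloneSet.eq_of_dist_lt {V : Type*} [MetricSpace V] {X : Set V} {r R : ℝ}
    (hX : IsDeloneSet X r R) {x y : V} (hx : x ∈ X) (hy : y ∈ X) (hxy : dist x y < r) :
    x = y :=
  hX.1 y ⟨hx, hxy⟩ ⟨hy, Metric.mem_ball_self (dist_nonneg.trans_lt hxy)⟩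

theorem IsDeloneSet.finite_inter_Icc {X : Set ℝ} {r R : ℝ} (hX : IsDeloneSet X r R)
    (hr : 0 < r) (a b : ℝ) : (X ∩ Icc a b).Finite := by
  refine Finite.of_finite_image (f := fun y => ⌊y / r⌋)
    ((finite_Icc ⌊a / r⌋ ⌊b / r⌋).subset ?_) ?_
  · rintro _ ⟨y, ⟨-, hay, hyb⟩, rfl⟩
    exact ⟨Int.floor_mono (by gcongr), Int.floor_mono (by gcongr)⟩
  · intro x hx y hy hxy
    refine hX.eq_of_dist_lt hx.1 hy.1 ?_
    have := Int.abs_sub_lt_one_of_floor_eq_floor hxy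
    rw [← sub_div, abs_div, abs_of_pos hr, div_lt_one hr] at this
    rwa [Real.dist_eq]

theorem exists_strictMono_int_range_eq {α : Type*} [LinearOrder α] {X : Set α}
    (hfin : ∀ a b, (X ∩ Icc a b).Finite) (hne : X.Nonempty)
    (hbelow : ∀ x ∈ X, ∃ y ∈ X, y < x) (habove : ∀ x ∈ X, ∃ y ∈ X, x < y) :
    ∃ f : ℤ → α, StrictMono f ∧ range f = X := by
  let : LocallyFiniteOrder X := LocallyFiniteOrder.ofFiniteIcc fun a b =>
    ((hfin a b).preimage Subtype.val_injective.injOn).subset fun z hz => ⟨z.2, hz⟩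
  let := LinearLocallyFiniteOrder.succOrder X
  let := LinearLocallyFiniteOrder.predOrder X
  have : NoMinOrder X := ⟨fun x => by
    obtain ⟨y, hy, hyx⟩ := hbelow x x.2
    exact ⟨⟨y, hy⟩, hyx⟩⟩
  have : NoMaxOrder X := ⟨fun x => by
    obtain ⟨y, hy, hxy⟩ := habove x x.2
    exact ⟨⟨y, hy⟩, hxy⟩⟩
  have : Nonempty X := hne.to_subtype
  let e : X ≃o ℤ := orderIsoIntOfLinearSuccPredArch
  refine ⟨(↑) ∘ e.symm, (Subtype.strictMono_coe _).comp e.symm.strictMono, ?_⟩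
  rw [range_comp, e.symm.range_eq, image_univ, Subtype.range_coe]

theorem StrictMono.apply_add_one_le {α : Type*} [Preorder α] {f : ℤ → α} (hf : StrictMono f)
    {n : ℤ} {z : α} (hz : z ∈ range f) (h : f n < z) : f (n + 1) ≤ z := by
  obtain ⟨k, rfl⟩ := hz
  exact hf.monotone (Int.add_one_le_of_lt (hf.lt_iff_lt.mp h))

theorem StrictMono.le_apply_sub_one {α : Type*} [Preorder α] {f : ℤ → α} (hf : StrictMono f)
    {n : ℤ} {z : α} (hz : z ∈ range f) (h : z < f n) : z ≤ f (n - 1) := by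
  obtain ⟨k, rfl⟩ := hz
  exact hf.monotone (Int.le_sub_one_of_lt (hf.lt_iff_lt.mp h))

theorem Function.Periodic.eq_of_even_sub {β : Type*} {g : ℤ → β} (hg : Periodic g 2)
    {n m : ℤ} (h : Even (n - m)) : g n = g m := by
  obtain ⟨k, hk⟩ := h
  rw [← hg.int_mul k m, Int.cast_id, show m + k * 2 = n by omega]

theorem Function.Periodic.eq_of_one {β : Type*} {g : ℤ → β} (hg : Periodic g 1) (n m : ℤ) :
    g n = g m := by
  simpa using (hg.int_mul_eq n).trans (hg.int_mul_eq m).symm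

section Gaps

variable {f : ℤ → ℝ}

theorem isRegularSystem_range_of_periodic (hper : Periodic (fun n => f (n + 1) - f n) 2) :
    IsRegularSystem (range f) := by
  rintro _ ⟨i, rfl⟩ _ ⟨j, rfl⟩
  rcases Int.even_or_odd (j - i) with ⟨k, hk⟩ | ⟨k, hk⟩
  · have hshift : Periodic (fun n => f (n + (j - i)) - f n) 1 := fun n => by
      have := hper.eq_of_even_sub (n := n + (j - i)) (m := n) ⟨k, by omega⟩
      simp only [add_right_comm n 1] at this ⊢
      linarith
    have hcomp : ⇑(IsometryEquiv.addRight (f j - f i)) ∘ f = f ∘ Equiv.addRight (j - i) := by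
      funext n
      have := hshift.eq_of_one n i
      simp only [add_sub_cancel] at this
      simp only [comp_apply, IsometryEquiv.addRight_apply, Equiv.coe_addRight]
      linarith
    refine ⟨IsometryEquiv.addRight (f j - f i), ?_, by simp⟩
    rw [← range_comp, hcomp, (Equiv.addRight (j - i)).surjective.range_comp]
  · have hrefl : Periodic (fun n => f n + f (i + j - n)) 1 := fun n => by
      have := hper.eq_of_even_sub (n := n) (m := i + j - n - 1) ⟨n - i - k, by omega⟩
      simp only [sub_add_cancel, show i + j - (n + 1) = i + j - n - 1 by ring] at this ⊢
      linarith
    have hcomp : ⇑(IsometryEquiv.subLeft (f i + f j)) ∘ f = f ∘ Equiv.subLeft (i + j) := by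
      funext n
      have := hrefl.eq_of_one n i
      simp only [add_sub_cancel_left] at this
      simp only [comp_apply, IsometryEquiv.subLeft_apply, Equiv.subLeft_apply]
      linarith
    refine ⟨IsometryEquiv.subLeft (f i + f j), ?_, by simp⟩
    rw [← range_comp, hcomp, (Equiv.subLeft (i + j)).surjective.range_comp]

theorem isABSet_range_of_periodic (hf : StrictMono f)
    (hper : Periodic (fun n => f (n + 1) - f n) 2) :
    IsABSet (range f) (f 1 - f 0) (f 2 - f 1) := by
  refine ⟨f, hf, rfl, fun i => ?_, fun i => ?_⟩
  · simpa [mul_comm] using hper.int_mul_eq i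
  · have h := hper.int_mul i 1
    simp only [Int.cast_id] at h
    rwa [show 1 + i * 2 + 1 = 2 * i + 2 by ring, show 1 + i * 2 = 2 * i + 1 by ring,
      one_add_one_eq_two] at h

theorem exists_isABSet_range_of_periodic (hf : StrictMono f)
    (hper : Periodic (fun n => f (n + 1) - f n) 2) :
    ∃ a b, 0 < a ∧ a ≤ b ∧ IsABSet (range f) a b := by
  rcases le_total (f 1 - f 0) (f 2 - f 1) with h | h
  · exact ⟨_, _, sub_pos.2 (hf zero_lt_one), h, isABSet_range_of_periodic hf hper⟩
  · have hshift := isABSet_range_of_periodic (f := f ∘ Equiv.addRight 1)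
      (hf.comp fun _ _ => by simp) (hper.add_const 1)
    have h20 : f 3 - f 2 = f 1 - f 0 := by simpa using hper 0
    rw [(Equiv.addRight 1).surjective.range_comp] at hshift
    simp only [comp_apply, Equiv.coe_addRight] at hshift
    norm_num [h20] at hshift
    exact ⟨_, _, sub_pos.2 (hf one_lt_two), h, hshift⟩

variable {ρ : ℝ}

theorem StrictMono.isLeast_centered_cluster_Ioi (hf : StrictMono f) {n : ℤ}
    (hn : ∃ y ∈ cluster (range f) (f n) ρ, f n < y) :
    IsLeast ((· - f n) '' cluster (range f) (f n) ρ ∩ Ioi 0) (f (n + 1) - f n) := by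
  obtain ⟨y, ⟨hy, hyρ⟩, hny⟩ := hn
  rw [Metric.mem_closedBall, Real.dist_eq, abs_of_pos (sub_pos.2 hny)] at hyρ
  have hle := hf.apply_add_one_le hy hny
  have hlt := hf (lt_add_one n)
  refine ⟨⟨⟨f (n + 1), ⟨mem_range_self _, ?_⟩, rfl⟩, sub_pos.2 hlt⟩, ?_⟩
  · rw [Metric.mem_closedBall, Real.dist_eq, abs_of_pos (sub_pos.2 hlt)]
    linarith
  · rintro _ ⟨⟨z, ⟨hz, -⟩, rfl⟩, hnz⟩
    exact sub_le_sub_right (hf.apply_add_one_le hz (sub_pos.1 hnz)) _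

theorem StrictMono.isLeast_neg_centered_cluster_Ioi (hf : StrictMono f) {n : ℤ}
    (hn : ∃ y ∈ cluster (range f) (f n) ρ, y < f n) :
    IsLeast (-((· - f n) '' cluster (range f) (f n) ρ) ∩ Ioi 0) (f n - f (n - 1)) := by
  obtain ⟨y, ⟨hy, hyρ⟩, hyn⟩ := hn
  rw [Metric.mem_closedBall, Real.dist_eq, abs_of_neg (sub_neg.2 hyn)] at hyρ
  have hle := hf.le_apply_sub_one hy hyn
  have hlt := hf (sub_one_lt n)
  refine ⟨⟨⟨f (n - 1), ⟨mem_range_self _, ?_⟩, by simp⟩, sub_pos.2 hlt⟩, ?_⟩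
  · rw [Metric.mem_closedBall, Real.dist_eq, abs_of_neg (sub_neg.2 hlt)]
    linarith
  · rintro w ⟨hw, hwpos⟩
    obtain ⟨z, ⟨hz, -⟩, hzw⟩ := mem_neg.1 hw
    rw [mem_Ioi] at hwpos
    simp only at hzw
    have := hf.le_apply_sub_one hz (by linarith : z < f n)
    linarith

theorem gaps_eq_or_swap_of_clustersEquiv (hf : StrictMono f)
    (hclus : ∀ x ∈ range f, ∀ x' ∈ range f, ClustersEquiv (range f) x x' ρ)
    (hsides : ∀ x ∈ range f,
      (∃ y ∈ cluster (range f) x ρ, y < x) ∧ (∃ y ∈ cluster (range f) x ρ, x < y))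
    (n m : ℤ) :
    (f (m + 1) - f m = f (n + 1) - f n ∧ f m - f (m - 1) = f n - f (n - 1)) ∨
      (f (m + 1) - f m = f n - f (n - 1) ∧ f m - f (m - 1) = f (n + 1) - f n) := by
  have right (k : ℤ) := hf.isLeast_centered_cluster_Ioi (hsides _ (mem_range_self k)).2
  have left (k : ℤ) := hf.isLeast_neg_centered_cluster_Ioi (hsides _ (mem_range_self k)).1
  rcases (hclus _ (mem_range_self n) _ (mem_range_self m)).centered_eq_or_eq_neg with h | h
  · refine .inl ⟨(right m).unique ?_, (left m).unique ?_⟩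
    · rw [h]; exact right n
    · rw [h]; exact left n
  · refine .inr ⟨(right m).unique ?_, (left m).unique ?_⟩
    · rw [h]; exact left n
    · rw [h, neg_neg]; exact right n

theorem periodic_gaps_of_clustersEquiv (hf : StrictMono f)
    (hclus : ∀ x ∈ range f, ∀ x' ∈ range f, ClustersEquiv (range f) x x' ρ)
    (hsides : ∀ x ∈ range f,
      (∃ y ∈ cluster (range f) x ρ, y < x) ∧ (∃ y ∈ cluster (range f) x ρ, x < y)) :
    Periodic (fun n => f (n + 1) - f n) 2 := by
  intro n
  have := gaps_eq_or_swap_of_clustersEquiv hf hclus hsides (n + 1) (n + 2)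
  simp only [show n + 2 - 1 = n + 1 by ring, show n + 1 - 1 = n by ring,
    show n + 1 + 1 = n + 2 by ring] at this
  rcases this with ⟨h, h'⟩ | ⟨h, -⟩ <;> linarith

end Gaps

theorem delone_line_abSet_general (r R ρ : ℝ) (hr : 0 < r)
    (X : Set ℝ) (hX : IsDeloneSet X r R)
    (hclus : ∀ x ∈ X, ∀ x' ∈ X, ClustersEquiv X x x' ρ)
    (hsides : ∀ x ∈ X, (∃ y ∈ cluster X x ρ, y < x) ∧ (∃ y ∈ cluster X x ρ, x < y)) :
    (∃ a b : ℝ, 0 < a ∧ a ≤ b ∧ IsABSet X a b) ∧ IsRegularSystem X := by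
  obtain ⟨f, hf, rfl⟩ := exists_strictMono_int_range_eq (hX.finite_inter_Icc hr)
    ((hX.2 0).mono inter_subset_left)
    (fun x hx => (hsides x hx).1.imp fun _ ⟨hy, hyx⟩ => ⟨hy.1, hyx⟩)
    (fun x hx => (hsides x hx).2.imp fun _ ⟨hy, hxy⟩ => ⟨hy.1, hxy⟩)
  have hper := periodic_gaps_of_clustersEquiv hf hclus hsides
  exact ⟨exists_isABSet_range_of_periodic hf hper, isRegularSystem_range_of_periodic hper⟩

/-- a Delone set `X ⊆ ℝ` of type `(r,R)` whose `ρ`-clusters are mutually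
equivalent and contain points of `X` on both sides of their centers is an `ab`-set
(for some `0 < a ≤ b`, possibly `a = b`), and hence a regular system. -/
theorem delone_line_abSet (r R ρ : ℝ) (hr : 0 < r) (hrR : r < R) (hρ : 0 < ρ)
    (X : Set ℝ) (hX : IsDeloneSet X r R)
    (hclus : ∀ x ∈ X, ∀ x' ∈ X, ClustersEquiv X x x' ρ)
    (hsides : ∀ x ∈ X, (∃ y ∈ cluster X x ρ, y < x) ∧ (∃ y ∈ cluster X x ρ, x < y)) :
    (∃ a b : ℝ, 0 < a ∧ a ≤ b ∧ IsABSet X a b) ∧ IsRegularSystem X :=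
  delone_line_abSet_general r R ρ hr X hX hclus hsides
end
end
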